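/- Let G be a group with a probability measure μ and let θ be a probability measure on G. If (1/n)‖Σ_{i=1}^n (θ*μ^{*i} − μ^{*i})‖_TV → 0 as n → ∞, then every bounded μ-harmonic function h with ‖h‖_∞ ≤ 1 satisfies (θ*h)(e) = h(e), where (θ*h)(g) = ∫_G h(gy) dθ(y). -/

import Mathlib

/-!
By harmonicity, `∫ h d(μ^{*i}) = h(e)` and `∫ h d(θ * μ^{*i}) = ∫ h dθ` for every `i`, so
integrating `h` against the difference of the two Cesàro sums gives `n ((θ*h)(e) - h(e))`.
A function bounded by `1` integrates against two finite measures to values at most `4 tvDist`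
apart (layer cake for the positive and negative parts of its real and imaginary parts), so
`‖(θ*h)(e) - h(e)‖ ≤ 4 (1/n) tvDist(…)`, which tends to `0`.
-/

open MeasureTheory Filter ProbabilityTheory
open scoped ENNReal NNReal

noncomputable def mconv {G : Type*} [Mul G] [MeasurableSpace G] (μ ν : Measure G) : Measure G :=
  (μ.prod ν).map (fun p => p.1 * p.2)

noncomputable def mconvPow {G : Type*} [Monoid G] [MeasurableSpace G] (μ : Measure G) : ℕ → Measure G
  | 0 => Measure.dirac 1
  | n+1 => mconv (mconvPow μ n) μ

noncomputable def tvDist {α : Type*} [MeasurableSpace α] (μ ν : Measure α) : ℝ :=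
  ⨆ A : Set α, |(μ A).toReal - (ν A).toReal|

noncomputable def tildeMeasure {G : Type*} [Monoid G] [MeasurableSpace G] (μ : Measure G) : Measure G :=
  Measure.sum (fun n => ((2:ℝ≥0∞)^(n+1))⁻¹ • mconvPow μ n)

section TotalVariation

variable {α : Type*} [MeasurableSpace α] (μ ν : Measure α) [IsFiniteMeasure μ] [IsFiniteMeasure ν]

lemma abs_toReal_sub_le_tvDist (A : Set α) : |(μ A).toReal - (ν A).toReal| ≤ tvDist μ ν := by
  refine le_ciSup (f := fun A => |(μ A).toReal - (ν A).toReal|)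
    ⟨(μ .univ).toReal + (ν .univ).toReal, ?_⟩ A
  rintro _ ⟨B, rfl⟩
  have : (μ B).toReal ≤ (μ .univ).toReal := measureReal_mono (Set.subset_univ B)
  have : (ν B).toReal ≤ (ν .univ).toReal := measureReal_mono (Set.subset_univ B)
  have := (μ B).toReal_nonneg
  have := (ν B).toReal_nonneg
  rw [abs_le]
  constructor <;> linarith

-- Layer cake: `∫ g dρ = ∫₀¹ ρ {g ≥ t} dt`, and the two integrands differ by at most `tvDist μ ν`.
lemma abs_integral_sub_le_tvDist_of_mem_Icc {g : α → ℝ} (hg : Measurable g)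
    (hg01 : ∀ x, g x ∈ Set.Icc 0 1) :
    |∫ x, g x ∂μ - ∫ x, g x ∂ν| ≤ tvDist μ ν := by
  have layer (ρ : Measure α) [IsFiniteMeasure ρ] :
      ∫ x, g x ∂ρ = ∫ t in Set.Ioc (0 : ℝ) 1, ρ.real {x | t ≤ g x} :=
    (Integrable.of_bound hg.aestronglyMeasurable 1 (.of_forall fun x => by
        simpa [abs_of_nonneg (hg01 x).1] using (hg01 x).2)).integral_eq_integral_Ioc_meas_le
      (.of_forall fun x => (hg01 x).1) (.of_forall fun x => (hg01 x).2)
  have layer_integrable (ρ : Measure α) [IsFiniteMeasure ρ] :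
      IntegrableOn (fun t : ℝ => ρ.real {x | t ≤ g x}) (Set.Ioc 0 1) := by
    have hanti : Antitone fun t : ℝ => ρ {x | t ≤ g x} :=
      fun s t hst => measure_mono fun x hx => hst.trans hx
    refine Integrable.of_bound hanti.measurable.ennreal_toReal.aestronglyMeasurable
      (ρ.real .univ) (.of_forall fun t => ?_)
    rw [Real.norm_of_nonneg measureReal_nonneg]
    exact measureReal_mono (Set.subset_univ _)
  rw [layer μ, layer ν, ← integral_sub (layer_integrable μ) (layer_integrable ν),
    ← Real.norm_eq_abs]
  calc _ ≤ tvDist μ ν * volume.real (Set.Ioc (0 : ℝ) 1) :=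
        norm_setIntegral_le_of_norm_le_const measure_Ioc_lt_top fun t _ =>
          abs_toReal_sub_le_tvDist μ ν _
    _ = tvDist μ ν := by simp

lemma abs_integral_sub_le_two_mul_tvDist {u : α → ℝ} (hu : Measurable u) (hu1 : ∀ x, |u x| ≤ 1) :
    |∫ x, u x ∂μ - ∫ x, u x ∂ν| ≤ 2 * tvDist μ ν := by
  have hpos : ∀ x, (u x)⁺ ∈ Set.Icc 0 1 := fun x =>
    ⟨posPart_nonneg _, sup_le ((le_abs_self _).trans (hu1 x)) zero_le_one⟩
  have hneg : ∀ x, (u x)⁻ ∈ Set.Icc 0 1 := fun x =>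
    ⟨negPart_nonneg _, sup_le ((neg_le_abs _).trans (hu1 x)) zero_le_one⟩
  have hpos_m : Measurable fun x => (u x)⁺ := hu.max measurable_const
  have hneg_m : Measurable fun x => (u x)⁻ := hu.neg.max measurable_const
  have split (ρ : Measure α) [IsFiniteMeasure ρ] :
      ∫ x, u x ∂ρ = ∫ x, (u x)⁺ ∂ρ - ∫ x, (u x)⁻ ∂ρ := by
    have bdd {v : α → ℝ} (hv : Measurable v) (h01 : ∀ x, v x ∈ Set.Icc 0 1) : Integrable v ρ :=
      .of_bound hv.aestronglyMeasurable 1 (.of_forall fun x => by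
        simpa [abs_of_nonneg (h01 x).1] using (h01 x).2)
    simp_rw [← integral_sub (bdd hpos_m hpos) (bdd hneg_m hneg), posPart_sub_negPart]
  have h₁ := abs_integral_sub_le_tvDist_of_mem_Icc μ ν hpos_m hpos
  have h₂ := abs_integral_sub_le_tvDist_of_mem_Icc μ ν hneg_m hneg
  rw [split μ, split ν]
  calc _ ≤ |∫ x, (u x)⁺ ∂μ - ∫ x, (u x)⁺ ∂ν| + |∫ x, (u x)⁻ ∂μ - ∫ x, (u x)⁻ ∂ν| := by
        rw [show ∀ a b c d : ℝ, a - b - (c - d) = (a - c) - (b - d) by intros; ring]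
        exact abs_sub _ _
    _ ≤ 2 * tvDist μ ν := by linarith

lemma norm_integral_sub_le_four_mul_tvDist {h : α → ℂ} (hm : Measurable h) (hb : ∀ x, ‖h x‖ ≤ 1) :
    ‖∫ x, h x ∂μ - ∫ x, h x ∂ν‖ ≤ 4 * tvDist μ ν := by
  have hint (ρ : Measure α) [IsFiniteMeasure ρ] : Integrable h ρ :=
    .of_bound hm.aestronglyMeasurable 1 (.of_forall hb)
  have hre := abs_integral_sub_le_two_mul_tvDist μ ν (Complex.measurable_re.comp hm)
    fun x => (Complex.abs_re_le_norm _).trans (hb x)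
  have him := abs_integral_sub_le_two_mul_tvDist μ ν (Complex.measurable_im.comp hm)
    fun x => (Complex.abs_im_le_norm _).trans (hb x)
  have re_comm (ρ : Measure α) [IsFiniteMeasure ρ] : ∫ x, (h x).re ∂ρ = (∫ x, h x ∂ρ).re :=
    integral_re (hint ρ)
  have im_comm (ρ : Measure α) [IsFiniteMeasure ρ] : ∫ x, (h x).im ∂ρ = (∫ x, h x ∂ρ).im :=
    integral_im (hint ρ)
  simp only [Function.comp_apply, re_comm, im_comm] at hre him
  refine (Complex.norm_le_abs_re_add_abs_im _).trans ?_
  rw [Complex.sub_re, Complex.sub_im]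
  linarith

end TotalVariation

section Convolution

variable {G : Type*} [Monoid G] [MeasurableSpace G]

lemma mconv_eq_measure_mconv (μ ν : Measure G) : mconv μ ν = μ ∗ₘ ν := rfl

variable [MeasurableMul₂ G]

instance isFiniteMeasure_mconv (μ ν : Measure G) [IsFiniteMeasure μ] [IsFiniteMeasure ν] :
    IsFiniteMeasure (mconv μ ν) :=
  inferInstanceAs (IsFiniteMeasure (μ ∗ₘ ν))

instance isFiniteMeasure_mconvPow (μ : Measure G) [IsFiniteMeasure μ] (n : ℕ) :
    IsFiniteMeasure (mconvPow μ n) := by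
  induction n with
  | zero => exact inferInstanceAs (IsFiniteMeasure (Measure.dirac 1))
  | succ n _ => exact isFiniteMeasure_mconv _ _

variable {E : Type*} [NormedAddCommGroup E] [NormedSpace ℝ E] [CompleteSpace E]

def IsHarmonic (μ : Measure G) (h : G → E) : Prop :=
  ∀ g, h g = ∫ γ, h (g * γ) ∂μ

namespace IsHarmonic

variable {μ : Measure G} [IsFiniteMeasure μ] {h : G → E} {C : ℝ}

lemma integral_mul_mconvPow (hh : IsHarmonic μ h) (hm : StronglyMeasurable h)
    (hb : ∀ g, ‖h g‖ ≤ C) (n : ℕ) (x : G) : ∫ y, h (x * y) ∂mconvPow μ n = h x := by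
  have hm_mul (x : G) : StronglyMeasurable fun y => h (x * y) :=
    hm.comp_measurable (measurable_const_mul x)
  induction n generalizing x with
  | zero => simp [mconvPow, integral_dirac' _ _ (hm_mul x)]
  | succ n ih =>
    rw [mconvPow, mconv_eq_measure_mconv,
      integral_mconv (.of_bound (hm_mul x).aestronglyMeasurable C (.of_forall fun _ => hb _))]
    have hh' (g : G) : ∫ γ, h (g * γ) ∂μ = h g := (hh g).symm
    simp_rw [← mul_assoc, hh']
    exact ih x

lemma integral_mconvPow (hh : IsHarmonic μ h) (hm : StronglyMeasurable h)
    (hb : ∀ g, ‖h g‖ ≤ C) (n : ℕ) : ∫ y, h y ∂mconvPow μ n = h 1 := by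
  simpa using hh.integral_mul_mconvPow hm hb n 1

lemma integral_mconv_mconvPow (hh : IsHarmonic μ h) (hm : StronglyMeasurable h)
    (hb : ∀ g, ‖h g‖ ≤ C) (θ : Measure G) [IsFiniteMeasure θ] (n : ℕ) :
    ∫ y, h y ∂mconv θ (mconvPow μ n) = ∫ y, h y ∂θ := by
  rw [mconv_eq_measure_mconv, integral_mconv (.of_bound hm.aestronglyMeasurable C (.of_forall hb))]
  exact integral_congr_ae (.of_forall (hh.integral_mul_mconvPow hm hb n))

end IsHarmonic

end Convolution

lemma IsHarmonic.natCast_mul_norm_sub_le_tvDist {G : Type*} [Monoid G] [MeasurableSpace G]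
    [MeasurableMul₂ G] {μ : Measure G} [IsFiniteMeasure μ] {h : G → ℂ} (hh : IsHarmonic μ h)
    (hm : Measurable h) (hb : ∀ g, ‖h g‖ ≤ 1) (θ : Measure G) [IsFiniteMeasure θ] (n : ℕ) :
    n * ‖∫ y, h y ∂θ - h 1‖ ≤ 4 * tvDist (∑ i ∈ Finset.Icc 1 n, mconv θ (mconvPow μ i))
      (∑ i ∈ Finset.Icc 1 n, mconvPow μ i) := by
  have hint (ρ : Measure G) [IsFiniteMeasure ρ] : Integrable h ρ :=
    .of_bound hm.aestronglyMeasurable 1 (.of_forall hb)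
  have key := norm_integral_sub_le_four_mul_tvDist
    (∑ i ∈ Finset.Icc 1 n, mconv θ (mconvPow μ i)) (∑ i ∈ Finset.Icc 1 n, mconvPow μ i) hm hb
  rwa [integral_finsetSum_measure fun i _ => hint _, integral_finsetSum_measure fun i _ => hint _,
    Finset.sum_congr rfl fun i _ => hh.integral_mconv_mconvPow hm.stronglyMeasurable hb θ i,
    Finset.sum_congr rfl fun i _ => hh.integral_mconvPow hm.stronglyMeasurable hb i,
    Finset.sum_const, Finset.sum_const, Nat.card_Icc, add_tsub_cancel_right, ← smul_sub,
    RCLike.norm_nsmul ℝ, nsmul_eq_mul] at key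

/-- if the Cesàro averages `(1/n)‖Σ_{i=1}^n (θ*μ^{*i} − μ^{*i})‖_TV` tend to 0,
then every bounded μ-harmonic function `h` with `‖h‖_∞ ≤ 1` satisfies `(θ*h)(e) = h(e)`. -/
theorem stmt17 {G : Type*} [Group G] [MeasurableSpace G] [MeasurableMul₂ G]
    (μ θ : Measure G) [IsProbabilityMeasure μ] [IsProbabilityMeasure θ]
    (hces : Tendsto (fun n : ℕ => (1 / (n : ℝ)) *
      tvDist (∑ i ∈ Finset.Icc 1 n, mconv θ (mconvPow μ i))
        (∑ i ∈ Finset.Icc 1 n, mconvPow μ i)) atTop (nhds 0)) :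
    ∀ h : G → ℂ, Measurable h → (∀ g, ‖h g‖ ≤ 1) →
      (∀ g, h g = ∫ γ, h (g * γ) ∂μ) →
      (∫ y, h y ∂θ) = h 1 := by
  intro h hm hb hh
  have bound (n : ℕ) (hn : 1 ≤ n) : ‖∫ y, h y ∂θ - h 1‖ ≤ 4 * ((1 / (n : ℝ)) *
      tvDist (∑ i ∈ Finset.Icc 1 n, mconv θ (mconvPow μ i))
        (∑ i ∈ Finset.Icc 1 n, mconvPow μ i)) := by
    have hn' : (0 : ℝ) < n := by exact_mod_cast hn
    rw [mul_left_comm, one_div, ← div_eq_inv_mul, le_div_iff₀ hn', mul_comm]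
    exact IsHarmonic.natCast_mul_norm_sub_le_tvDist hh hm hb θ n
  have hnorm := ge_of_tendsto (by simpa using hces.const_mul 4) (eventually_atTop.2 ⟨1, bound⟩)
  exact sub_eq_zero.1 (norm_le_zero_iff.1 hnorm)
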